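/- Let M be a binary matroid and C a circuit with k ≥ 4 elements. The following are equivalent: (1) C has a chord; (2) ∂(e_C) ∈ ℑ(𝔠_{k−1}); (3) e_C ∈ ℑ(𝔠_{k−1}). -/

import Mathlib

open ExteriorAlgebra

/-- The Grassmann algebra over `K` on generators `e 0, ..., e (n-1)`. -/
abbrev Grass (K : Type) [Field K] (n : ℕ) := ExteriorAlgebra K (Fin n → K)

/-- The generator `e i`. -/
noncomputable def gen (K : Type) [Field K] (n : ℕ) (i : Fin n) : Grass K n :=
  ExteriorAlgebra.ι K (Pi.single i 1)

/-- The monomial associated to a list of indices. -/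
noncomputable def monList (K : Type) [Field K] (n : ℕ) (l : List (Fin n)) : Grass K n :=
  (l.map (gen K n)).prod

/-- The monomial `e_X` of a subset `X ⊆ [n]`, factors in increasing order. -/
noncomputable def mon (K : Type) [Field K] (n : ℕ) (X : Finset (Fin n)) : Grass K n :=
  monList K n (X.sort (· ≤ ·))

/-- The degree `-1` antiderivation `∂` on the Grassmann algebra with `∂ (e i) = 1`
(left contraction with the covector sending each generator to `1`). -/
noncomputable def bd (K : Type) [Field K] (n : ℕ) : Grass K n →ₗ[K] Grass K n :=
  CliffordAlgebra.contractLeft (∑ i : Fin n, LinearMap.proj i)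

/-- The two-sided ideal `ℑ(𝔛)` generated by the differentials `∂ e_Y`, `Y ∈ 𝔛`. -/
noncomputable def OSIdeal (K : Type) [Field K] (n : ℕ) (X : Set (Finset (Fin n))) :
    TwoSidedIdeal (Grass K n) :=
  TwoSidedIdeal.span ((fun Y => bd K n (mon K n Y)) '' X)

/-- A circuit of a matroid: a minimal dependent (finite) set. -/
def IsCircuit {α : Type} [DecidableEq α] (M : Matroid α) (C : Finset α) : Prop :=
  M.Dep (C : Set α) ∧ ∀ D : Finset α, D ⊂ C → ¬ M.Dep (D : Set α)

/-- `i` is a chord of the circuit `C`, witnessed by circuits `C₁, C₂` with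
`C₁ ∩ C₂ = {i}` and `C = C₁ Δ C₂`. -/
def IsChord {α : Type} [DecidableEq α] (M : Matroid α) (C : Finset α) (i : α) : Prop :=
  ∃ C₁ C₂ : Finset α, IsCircuit M C₁ ∧ IsCircuit M C₂ ∧ C₁ ∩ C₂ = {i} ∧ C = symmDiff C₁ C₂

def HasChord {α : Type} [DecidableEq α] (M : Matroid α) (C : Finset α) : Prop :=
  ∃ i, IsChord M C i

/-- `M` is `ℓ`-chordal: every circuit with at least `ℓ` elements has a chord. -/
def Chordal {α : Type} [DecidableEq α] (M : Matroid α) (l : ℕ) : Prop :=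
  ∀ C : Finset α, IsCircuit M C → l ≤ C.card → HasChord M C

/-- `M` is simple: every circuit has at least 3 elements. -/
def SimpleM {α : Type} [DecidableEq α] (M : Matroid α) : Prop :=
  ∀ C : Finset α, IsCircuit M C → 3 ≤ C.card

/-- `M` is binary: the symmetric difference of two distinct circuits contains a circuit. -/
def BinaryM {α : Type} [DecidableEq α] (M : Matroid α) : Prop :=
  ∀ C D : Finset α, IsCircuit M C → IsCircuit M D → C ≠ D →
    ∃ C', IsCircuit M C' ∧ C' ⊆ symmDiff C D

/-- The set `𝔠` of circuits of `M`. -/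
def Circuits {α : Type} [DecidableEq α] (M : Matroid α) : Set (Finset α) :=
  {C | IsCircuit M C}

/-- The set `𝔠_k` of circuits of `M` with at most `k` elements. -/
def CircuitsLe {α : Type} [DecidableEq α] (M : Matroid α) (k : ℕ) : Set (Finset α) :=
  {C | IsCircuit M C ∧ C.card ≤ k}

/-!
Let `i` be a chord, `C₁ = {i} ∪ A` and `C₂ = {i} ∪ B`. Up to sign `e_C = e_B e_A`, and
`e_B ∂(e_i e_A) = e_B e_A - (e_B e_i) ∂e_A` with `e_B e_i = ±e_{C₂}`. Since `e_Y = e_a ∂e_Y` for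
`a ∈ Y`, every `e_Y` with `Y ∈ 𝔛` lies in `ℑ(𝔛)`, so `e_C ∈ ℑ(𝔠_{k-1})`: circuits of a simple
matroid have at least three elements, so `C₁` and `C₂` are shorter than `C`. The identity
`e_Y = e_a ∂e_Y` and the `∂`-stability of `ℑ(𝔛)` also give `(2) ↔ (3)`.

Conversely, the algebra endomorphism of `ℰ` killing the generators outside `C` fixes `e_C ≠ 0`,
so it cannot kill every generator `∂e_Y` of `ℑ(𝔠_{k-1})`. This yields a shorter circuit `Y` and
`t ∈ Y` with `Y ∖ t ⊆ C`, and binarity makes `t` a chord of `C`.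
-/

theorem TwoSidedIdeal.smul_mem_of_mem {K A : Type*} [CommRing K] [Ring A] [Algebra K A]
    (I : TwoSidedIdeal A) (c : K) {x : A} (hx : x ∈ I) : c • x ∈ I := by
  rw [Algebra.smul_def]
  exact I.mul_mem_left _ _ hx

section Finset

variable {α : Type*} [DecidableEq α]

lemma Finset.symmDiff_eq_erase_union_erase {C₁ C₂ : Finset α} {i : α}
    (hi : C₁ ∩ C₂ = {i}) : symmDiff C₁ C₂ = C₁.erase i ∪ C₂.erase i := by
  ext a
  have := Finset.ext_iff.1 hi a
  simp only [Finset.mem_inter, Finset.mem_singleton] at this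
  simp only [Finset.mem_symmDiff, Finset.mem_union, Finset.mem_erase]
  tauto

lemma Finset.disjoint_erase_erase {C₁ C₂ : Finset α} {i : α} (hi : C₁ ∩ C₂ = {i}) :
    Disjoint (C₁.erase i) (C₂.erase i) := by
  rw [Finset.disjoint_left]
  intro a ha₁ ha₂
  have := Finset.ext_iff.1 hi a
  simp only [Finset.mem_inter, Finset.mem_singleton, Finset.mem_erase] at this ha₁ ha₂
  tauto

end Finset

namespace Grass

variable {K : Type} [Field K] {n : ℕ}

open CliffordAlgebra (involute contractLeft)

@[simp]
lemma monList_nil : monList K n [] = 1 := rfl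

@[simp]
lemma monList_cons (a : Fin n) (l : List (Fin n)) :
    monList K n (a :: l) = gen K n a * monList K n l := by
  simp [monList]

@[simp]
lemma monList_append (l l' : List (Fin n)) :
    monList K n (l ++ l') = monList K n l * monList K n l' := by
  simp [monList]

lemma gen_mul_self (a : Fin n) : gen K n a * gen K n a = 0 :=
  ExteriorAlgebra.ι_sq_zero _

lemma gen_mul_gen_comm (a b : Fin n) : gen K n a * gen K n b = -(gen K n b * gen K n a) :=
  eq_neg_of_add_eq_zero_left (ExteriorAlgebra.ι_add_mul_swap _ _)

lemma exists_monList_eq_smul_of_perm {l l' : List (Fin n)} (h : l.Perm l') :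
    ∃ c : K, monList K n l = c • monList K n l' := by
  induction h with
  | nil => exact ⟨1, by simp⟩
  | cons a _ ih =>
    obtain ⟨c, hc⟩ := ih
    exact ⟨c, by rw [monList_cons, monList_cons, hc, mul_smul_comm]⟩
  | swap a b l =>
    refine ⟨-1, ?_⟩
    simp only [monList_cons, ← mul_assoc, gen_mul_gen_comm b a, neg_mul, neg_smul, one_smul]
  | trans _ _ ih₁ ih₂ =>
    obtain ⟨c, hc⟩ := ih₁
    obtain ⟨c', hc'⟩ := ih₂
    exact ⟨c * c', by rw [hc, hc', smul_smul]⟩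

lemma perm_sort_of_toFinset_eq {l : List (Fin n)} {T : Finset (Fin n)} (hl : l.Nodup)
    (hT : l.toFinset = T) : l.Perm (T.sort (· ≤ ·)) :=
  List.perm_of_nodup_nodup_toFinset_eq hl (T.sort_nodup _) (by rw [T.sort_toFinset, hT])

lemma exists_monList_eq_smul_mon {l : List (Fin n)} {T : Finset (Fin n)} (hl : l.Nodup)
    (hT : l.toFinset = T) : ∃ c : K, monList K n l = c • mon K n T :=
  exists_monList_eq_smul_of_perm (perm_sort_of_toFinset_eq hl hT)

lemma exists_mon_eq_smul_monList {l : List (Fin n)} {T : Finset (Fin n)} (hl : l.Nodup)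
    (hT : l.toFinset = T) : ∃ c : K, mon K n T = c • monList K n l :=
  exists_monList_eq_smul_of_perm (perm_sort_of_toFinset_eq hl hT).symm

@[simp]
lemma mon_empty : mon K n ∅ = 1 := by
  simp [mon]

lemma involute_monList (l : List (Fin n)) :
    involute (monList K n l) = (-1 : K) ^ l.length • monList K n l := by
  induction l with
  | nil => simp
  | cons a l ih =>
    rw [monList_cons, map_mul, gen, CliffordAlgebra.involute_ι, ih, List.length_cons, pow_succ,
      neg_mul, mul_smul_comm, mul_neg_one, neg_smul]

lemma involute_mon (T : Finset (Fin n)) :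
    involute (mon K n T) = (-1 : K) ^ T.card • mon K n T := by
  rw [mon, involute_monList, Finset.length_sort]

lemma bd_one : bd K n 1 = 0 :=
  CliffordAlgebra.contractLeft_one _ _

lemma bd_bd (x : Grass K n) : bd K n (bd K n x) = 0 :=
  CliffordAlgebra.contractLeft_contractLeft _ _

lemma bd_gen_mul (a : Fin n) (x : Grass K n) :
    bd K n (gen K n a * x) = x - gen K n a * bd K n x := by
  rw [bd, gen, CliffordAlgebra.contractLeft_ι_mul]
  simp [Pi.single_apply]

lemma gen_mul_bd_gen_mul (a : Fin n) (x : Grass K n) :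
    gen K n a * bd K n (gen K n a * x) = gen K n a * x := by
  rw [bd_gen_mul, mul_sub, ← mul_assoc, gen_mul_self, zero_mul, sub_zero]

lemma bd_mul (x y : Grass K n) :
    bd K n (x * y) = bd K n x * y + involute x * bd K n y := by
  induction x using ExteriorAlgebra.induction generalizing y with
  | algebraMap r =>
    rw [CliffordAlgebra.involute.commutes, ← Algebra.smul_def, ← Algebra.smul_def, map_smul, bd,
      CliffordAlgebra.contractLeft_algebraMap, zero_mul, zero_add]
  | ι m =>
    rw [bd, CliffordAlgebra.contractLeft_ι_mul, CliffordAlgebra.contractLeft_ι,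
      CliffordAlgebra.involute_ι, ← Algebra.smul_def, neg_mul, sub_eq_add_neg]
  | mul a b iha ihb =>
    rw [mul_assoc, iha, ihb, iha, map_mul]
    noncomm_ring
  | add a b iha ihb =>
    rw [add_mul, map_add, map_add, map_add, iha, ihb]
    noncomm_ring

lemma involute_bd (x : Grass K n) :
    involute (bd K n x) = -bd K n (involute x) := by
  induction x using ExteriorAlgebra.induction with
  | algebraMap r => simp [bd, CliffordAlgebra.contractLeft_algebraMap]
  | ι m => simp [bd, CliffordAlgebra.contractLeft_ι]
  | mul a b iha ihb =>
    rw [bd_mul, map_add, map_mul, map_mul, iha, ihb, map_mul, bd_mul,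
      CliffordAlgebra.involute_involute]
    noncomm_ring
  | add a b iha ihb => rw [map_add, map_add, iha, ihb, map_add, map_add, neg_add]

lemma mon_mem_of_bd_mon_mem {I : TwoSidedIdeal (Grass K n)} {Y : Finset (Fin n)}
    (hY : Y.Nonempty) (h : bd K n (mon K n Y) ∈ I) : mon K n Y ∈ I := by
  obtain ⟨a, l, hal⟩ := List.exists_cons_of_ne_nil (l := Y.sort (· ≤ ·)) <| by
    rw [Ne, ← List.length_eq_zero_iff, Finset.length_sort, Finset.card_eq_zero]
    exact hY.ne_empty
  have hmon : mon K n Y = gen K n a * monList K n l := by rw [mon, hal, monList_cons]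
  rw [hmon, ← gen_mul_bd_gen_mul, ← hmon]
  exact I.mul_mem_left _ _ h

lemma bd_mon_mem_OSIdeal {X : Set (Finset (Fin n))} {Y : Finset (Fin n)} (hY : Y ∈ X) :
    bd K n (mon K n Y) ∈ OSIdeal K n X :=
  TwoSidedIdeal.subset_span ⟨Y, hY, rfl⟩

lemma mon_mem_OSIdeal {X : Set (Finset (Fin n))} {Y : Finset (Fin n)} (hY : Y ∈ X)
    (hne : Y.Nonempty) : mon K n Y ∈ OSIdeal K n X :=
  mon_mem_of_bd_mon_mem hne (bd_mon_mem_OSIdeal hY)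

/-- The Leibniz rule `∂(xy) = ∂x y + x̂ ∂y` involves the grading involution `x ↦ x̂`, so
stability under the involution is carried through the induction along with stability under `∂`. -/
lemma bd_mem_OSIdeal {X : Set (Finset (Fin n))} {x : Grass K n} (hx : x ∈ OSIdeal K n X) :
    bd K n x ∈ OSIdeal K n X := by
  set I := OSIdeal K n X
  suffices bd K n x ∈ I ∧ involute x ∈ I from this.1
  induction hx using TwoSidedIdeal.span_induction with
  | mem _ hY =>
    obtain ⟨Y, hY, rfl⟩ := hY
    refine ⟨by rw [bd_bd]; exact I.zero_mem, ?_⟩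
    rw [involute_bd, involute_mon, map_smul, ← neg_smul]
    exact I.smul_mem_of_mem _ (bd_mon_mem_OSIdeal hY)
  | zero => simp [I.zero_mem]
  | add x y _ _ hx hy => simpa only [map_add] using ⟨I.add_mem hx.1 hy.1, I.add_mem hx.2 hy.2⟩
  | neg x _ hx => simpa only [map_neg] using ⟨I.neg_mem hx.1, I.neg_mem hx.2⟩
  | left_absorb a x hxI hx =>
    rw [bd_mul, map_mul]
    exact ⟨I.add_mem (I.mul_mem_left _ _ hxI) (I.mul_mem_left _ _ hx.1), I.mul_mem_left _ _ hx.2⟩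
  | right_absorb b x _ hx =>
    rw [bd_mul, map_mul]
    exact ⟨I.add_mem (I.mul_mem_right _ _ hx.1) (I.mul_mem_right _ _ hx.2),
      I.mul_mem_right _ _ hx.2⟩

lemma mon_symmDiff_mem_OSIdeal {X : Set (Finset (Fin n))} {C₁ C₂ : Finset (Fin n)} {i : Fin n}
    (h₁ : C₁ ∈ X) (h₂ : C₂ ∈ X) (hi : C₁ ∩ C₂ = {i}) :
    mon K n (symmDiff C₁ C₂) ∈ OSIdeal K n X := by
  set I := OSIdeal K n X
  obtain ⟨hi₁, hi₂⟩ := Finset.mem_inter.1 (hi ▸ Finset.mem_singleton_self i)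
  set a := (C₁.erase i).sort (· ≤ ·)
  set b := (C₂.erase i).sort (· ≤ ·)
  have ha : (i :: a).Nodup := by simp [a, Finset.sort_nodup]
  have hb : (b ++ [i]).Nodup := by simp +contextual [b, List.nodup_append, Finset.sort_nodup]
  have hba : (b ++ a).Nodup :=
    List.nodup_append.2 ⟨Finset.sort_nodup _ _, Finset.sort_nodup _ _, fun x hxb y hya hxy =>
      Finset.disjoint_left.1 (Finset.disjoint_erase_erase hi) (by simpa [a, hxy] using hya)
        (by simpa [b] using hxb)⟩
  obtain ⟨c₁, hc₁⟩ := exists_monList_eq_smul_mon (K := K) (T := C₁) ha (by simp [a, hi₁])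
  obtain ⟨c₂, hc₂⟩ := exists_monList_eq_smul_mon (K := K) (T := C₂) hb (by simp [b, hi₂])
  obtain ⟨c, hc⟩ := exists_mon_eq_smul_monList (K := K) (T := symmDiff C₁ C₂) hba
    (by rw [Finset.symmDiff_eq_erase_union_erase hi, Finset.union_comm]; simp [a, b])
  have hkey : monList K n b * bd K n (monList K n (i :: a)) =
      monList K n (b ++ a) - monList K n (b ++ [i]) * bd K n (monList K n a) := by
    simp only [monList_cons, bd_gen_mul, mul_sub, monList_append, monList_nil, mul_one, mul_assoc]
  have hbi : monList K n (b ++ [i]) ∈ I := by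
    rw [hc₂]
    exact I.smul_mem_of_mem _ (mon_mem_OSIdeal h₂ ⟨i, hi₂⟩)
  have hba_mem : monList K n (b ++ a) ∈ I := by
    rw [← sub_add_cancel (monList K n (b ++ a)) (monList K n (b ++ [i]) * _), ← hkey, hc₁,
      map_smul]
    exact I.add_mem (I.mul_mem_left _ _ (I.smul_mem_of_mem _ (bd_mon_mem_OSIdeal h₁)))
      (I.mul_mem_right _ _ hbi)
  rw [hc]
  exact I.smul_mem_of_mem _ hba_mem

lemma contractLeft_proj_monList_of_notMem {c : Fin n} {l : List (Fin n)} (hc : c ∉ l) :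
    contractLeft (LinearMap.proj c) (monList K n l) = 0 := by
  induction l with
  | nil => exact CliffordAlgebra.contractLeft_one _ _
  | cons a l ih =>
    rw [List.mem_cons, not_or] at hc
    rw [monList_cons, gen, CliffordAlgebra.contractLeft_ι_mul, ← gen, ih hc.2]
    simp [Ne.symm hc.1]

lemma exists_linearMap_monList_eq_one {l : List (Fin n)} (hl : l.Nodup) :
    ∃ f : Grass K n →ₗ[K] Grass K n, f (monList K n l) = 1 := by
  induction l with
  | nil => exact ⟨LinearMap.id, rfl⟩
  | cons a l ih =>
    rw [List.nodup_cons] at hl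
    obtain ⟨f, hf⟩ := ih hl.2
    refine ⟨f ∘ₗ contractLeft (LinearMap.proj a), ?_⟩
    rw [LinearMap.comp_apply, monList_cons, gen, CliffordAlgebra.contractLeft_ι_mul, ← gen,
      contractLeft_proj_monList_of_notMem hl.1]
    simpa using hf

lemma mon_ne_zero (T : Finset (Fin n)) : mon K n T ≠ 0 := by
  obtain ⟨f, hf⟩ := exists_linearMap_monList_eq_one (K := K) (T.sort_nodup (· ≤ ·))
  intro h
  rw [← mon, h, map_zero] at hf
  exact zero_ne_one hf

variable (K) in
def coordProj (C : Finset (Fin n)) : (Fin n → K) →ₗ[K] (Fin n → K) :=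
  LinearMap.pi fun i => if i ∈ C then LinearMap.proj i else 0

lemma coordProj_single (C : Finset (Fin n)) (a : Fin n) :
    coordProj K C (Pi.single a 1) = if a ∈ C then Pi.single a 1 else 0 := by
  ext i
  by_cases hi : i ∈ C <;> by_cases ha : a ∈ C <;> simp [coordProj, hi, ha, Pi.single_apply] <;>
    grind

lemma map_coordProj_gen (C : Finset (Fin n)) (a : Fin n) :
    ExteriorAlgebra.map (coordProj K C) (gen K n a) = if a ∈ C then gen K n a else 0 := by
  rw [gen, ExteriorAlgebra.map_apply_ι, coordProj_single]
  split_ifs <;> simp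

lemma map_coordProj_monList {C : Finset (Fin n)} {l : List (Fin n)} (hl : ∀ a ∈ l, a ∈ C) :
    ExteriorAlgebra.map (coordProj K C) (monList K n l) = monList K n l := by
  induction l with
  | nil => simp
  | cons a l ih =>
    rw [monList_cons, map_mul, map_coordProj_gen, if_pos (hl a List.mem_cons_self),
      ih fun b hb => hl b (List.mem_cons_of_mem a hb)]

/-- If `Y \ t ⊄ C` for every `t`, then `Y` has two elements `a, b` outside `C`, and
`∂(e_a e_b x) = e_b x - e_a ∂(e_b x)` is killed by the projection onto the `C`-coordinates. -/
lemma map_coordProj_bd_mon {C Y : Finset (Fin n)} (hY : ∀ t ∈ Y, ¬ Y.erase t ⊆ C) :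
    ExteriorAlgebra.map (coordProj K C) (bd K n (mon K n Y)) = 0 := by
  rcases Y.eq_empty_or_nonempty with rfl | ⟨t, ht⟩
  · rw [mon_empty, bd_one, map_zero]
  obtain ⟨a, ha, haC⟩ := Finset.not_subset.1 (hY t ht)
  have haY := Finset.mem_of_mem_erase ha
  obtain ⟨b, hb, hbC⟩ := Finset.not_subset.1 (hY a haY)
  set R := ((Y.erase a).erase b).sort (· ≤ ·)
  obtain ⟨c, hc⟩ := exists_mon_eq_smul_monList (K := K) (T := Y) (l := a :: b :: R)
    (by simp [R, Finset.sort_nodup, hb, (Finset.ne_of_mem_erase hb).symm])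
    (by simp [R, Finset.insert_erase hb, Finset.insert_erase haY])
  rw [hc, map_smul, monList_cons, bd_gen_mul, monList_cons, map_smul, map_sub, map_mul, map_mul,
    map_coordProj_gen, map_coordProj_gen, if_neg haC, if_neg hbC]
  simp

lemma exists_erase_subset_of_mon_mem_OSIdeal {X : Set (Finset (Fin n))} {C : Finset (Fin n)}
    (h : mon K n C ∈ OSIdeal K n X) : ∃ Y ∈ X, ∃ t ∈ Y, Y.erase t ⊆ C := by
  by_contra! hX
  set ψ := ExteriorAlgebra.map (coordProj K C)
  have hker : OSIdeal K n X ≤ TwoSidedIdeal.ker ψ :=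
    TwoSidedIdeal.span_le.2 <| by
      rintro _ ⟨Y, hY, rfl⟩
      exact (TwoSidedIdeal.mem_ker ψ).2 (map_coordProj_bd_mon (hX Y hY))
  have hψC : ψ (mon K n C) = mon K n C :=
    map_coordProj_monList fun a ha => (Finset.mem_sort _).1 ha
  exact mon_ne_zero C (hψC ▸ (TwoSidedIdeal.mem_ker ψ).1 (hker h))

end Grass

section Matroid

variable {α : Type} [DecidableEq α] {M : Matroid α}

lemma IsCircuit.eq_of_subset {C D : Finset α} (hC : IsCircuit M C) (hD : M.Dep (D : Set α))
    (h : D ⊆ C) : D = C := by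
  by_contra hne
  exact hC.2 D (Finset.ssubset_iff_subset_ne.2 ⟨h, hne⟩) hD

lemma IsCircuit.nonempty {C : Finset α} (hC : IsCircuit M C) : C.Nonempty := by
  simpa using hC.1.nonempty

lemma IsChord.exists_circuitsLe (hs : SimpleM M) {C : Finset α} {i : α} (h : IsChord M C i) :
    ∃ C₁ C₂, C₁ ∈ CircuitsLe M (C.card - 1) ∧ C₂ ∈ CircuitsLe M (C.card - 1) ∧
      C₁ ∩ C₂ = {i} ∧ C = symmDiff C₁ C₂ := by
  obtain ⟨C₁, C₂, h₁, h₂, hi, rfl⟩ := h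
  obtain ⟨hi₁, hi₂⟩ := Finset.mem_inter.1 (hi ▸ Finset.mem_singleton_self i)
  have hcard : (symmDiff C₁ C₂).card + 2 = C₁.card + C₂.card := by
    rw [Finset.symmDiff_eq_erase_union_erase hi,
      Finset.card_union_of_disjoint (Finset.disjoint_erase_erase hi),
      Finset.card_erase_of_mem hi₁, Finset.card_erase_of_mem hi₂]
    have := hs C₁ h₁
    have := hs C₂ h₂
    omega
  have := hs C₁ h₁
  have := hs C₂ h₂
  exact ⟨C₁, C₂, ⟨h₁, by omega⟩, ⟨h₂, by omega⟩, hi, rfl⟩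

/-- In a binary matroid, a circuit `Y` shorter than `C` with `Y \ t ⊆ C` gives the chord `t`:
a circuit `D ⊆ Y Δ C` must contain `t`, and then `C` is the circuit inside `Y Δ D ⊆ C`. -/
lemma hasChord_of_erase_subset (hs : SimpleM M) (hb : BinaryM M) {C Y : Finset α}
    (hC : IsCircuit M C) (hY : IsCircuit M Y) (hcard : Y.card < C.card) {t : α} (ht : t ∈ Y)
    (hsub : Y.erase t ⊆ C) : HasChord M C := by
  obtain ⟨a, ha⟩ : (Y.erase t).Nonempty := by
    rw [← Finset.card_pos, Finset.card_erase_of_mem ht]; have := hs Y hY; omega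
  have htC : t ∉ C := fun htC => hcard.ne (congrArg Finset.card
    (hC.eq_of_subset hY.1 (by rw [← Finset.insert_erase ht]; exact Finset.insert_subset htC hsub)))
  obtain ⟨D, hD, hDsub⟩ := hb Y C hY hC (by rintro rfl; exact htC ht)
  have hD' : ∀ x ∈ D, (x ∈ Y ∧ x ∉ C) ∨ (x ∈ C ∧ x ∉ Y) := fun x hx => by
    simpa [Finset.mem_symmDiff] using hDsub hx
  have hY' : ∀ x ∈ Y, x ≠ t → x ∈ C := fun x hx hxt => hsub (Finset.mem_erase.2 ⟨hxt, hx⟩)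
  have haY : a ∈ Y := Finset.mem_of_mem_erase ha
  have haD : a ∉ D := fun haD => by grind
  have htD : t ∈ D := by
    by_contra htD
    have hDC : D ⊆ C := fun x hx => by grind
    exact haD (hC.eq_of_subset hD.1 hDC ▸ hsub ha)
  have hYD : Y ∩ D = {t} := by
    ext x; simp only [Finset.mem_inter, Finset.mem_singleton]; grind
  obtain ⟨E, hE, hEsub⟩ := hb Y D hY hD (by rintro rfl; exact haD haY)
  have hYDC : symmDiff Y D ⊆ C := fun x hx => by
    rw [Finset.mem_symmDiff] at hx; grind
  have hEC := hC.eq_of_subset hE.1 (hEsub.trans hYDC)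
  exact ⟨t, Y, D, hY, hD, hYD, (hYDC.antisymm (hEC ▸ hEsub)).symm⟩

end Matroid

open Grass

theorem stmt10_general (K : Type) [Field K] (n : ℕ) (M : Matroid (Fin n))
    (hs : SimpleM M) (hb : BinaryM M) (C : Finset (Fin n)) (hC : IsCircuit M C) :
    (HasChord M C ↔ bd K n (mon K n C) ∈ OSIdeal K n (CircuitsLe M (C.card - 1))) ∧
    (HasChord M C ↔ mon K n C ∈ OSIdeal K n (CircuitsLe M (C.card - 1))) := by
  have hmon : HasChord M C ↔ mon K n C ∈ OSIdeal K n (CircuitsLe M (C.card - 1)) := by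
    constructor
    · rintro ⟨i, hchord⟩
      obtain ⟨C₁, C₂, h₁, h₂, hi, rfl⟩ := hchord.exists_circuitsLe hs
      exact mon_symmDiff_mem_OSIdeal h₁ h₂ hi
    · intro h
      obtain ⟨Y, ⟨hY, hYcard⟩, t, ht, hsub⟩ := exists_erase_subset_of_mon_mem_OSIdeal h
      have hC₃ := hs C hC
      exact hasChord_of_erase_subset hs hb hC hY (by omega) ht hsub
  refine ⟨⟨fun h => bd_mem_OSIdeal (hmon.1 h), fun h => hmon.2 ?_⟩, hmon⟩
  exact mon_mem_of_bd_mon_mem hC.nonempty h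

/-- for a circuit `C` of a binary matroid with `|C| = k ≥ 4`, the following
are equivalent: `C` has a chord; `∂ e_C ∈ ℑ(𝔠_{k-1})`; `e_C ∈ ℑ(𝔠_{k-1})`. -/
theorem stmt10 (K : Type) [Field K] (n : ℕ) (M : Matroid (Fin n)) (hE : M.E = Set.univ)
    (hs : SimpleM M) (hb : BinaryM M) (C : Finset (Fin n)) (hC : IsCircuit M C)
    (hk : 4 ≤ C.card) :
    (HasChord M C ↔ bd K n (mon K n C) ∈ OSIdeal K n (CircuitsLe M (C.card - 1))) ∧
    (HasChord M C ↔ mon K n C ∈ OSIdeal K n (CircuitsLe M (C.card - 1))) :=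
  stmt10_general K n M hs hb C hC
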